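/- There exists a positive constant C (depending only on λ) such that |S_{n+1}(x) − S_n(x)| ≤ C a_n for all n = 0, 1, 2, … and all x ∈ K. -/

import Mathlib

/-!
Write `δ = 1 - 2λ`. Two distinct squares of generation `n` are at distance at least `δ s_n`,
because two siblings are separated by a gap `s_{n-1} - 2 s_n ≥ δ s_{n-1}`.

`S_{n+1}(x) - S_n(x)` is the average of `T_{n+1} - T_n` over `Q_{n+1}(x)` plus the difference
of the averages of `T_n` over `Q_{n+1}(x)` and over `Q_n(x)`. On `Q_{n+1}(x)`, `T_{n+1} - T_n` is
the Cauchy integral over `K ∩ Q_n(x) ∖ Q_{n+1}(x)`, a set of mass at most `4⁻ⁿ` at distance at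
least `δ s_{n+1} ≥ δ s_n / 4`, so it is `O(a_n)`. On `Q_n(x)`, `T_n` is Lipschitz with constant
`c 4⁻ⁿ / s_n²`: going from `n` to `n + 1` adds such a layer, and `s_{n+1} ≤ λ s_n` makes the
contributions grow geometrically with ratio `1 / (4λ²) > 1`, so the last one dominates. As
`Q_n(x)` has diameter at most `2 s_n`, the oscillation of `T_n` on `Q_n(x)` is `O(a_n)` too.
-/

open MeasureTheory Filter Set Topology
open scoped ENNReal

noncomputable section

/-- Side length of generation-`n` squares: `s n = λ₁ ⋯ λₙ` (here `Λ k` is `λ_{k+1}`). -/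
def sideLen (Λ : ℕ → ℝ) (n : ℕ) : ℝ := ∏ k ∈ Finset.range n, Λ k

/-- Lower-left corner of the generation-`n` square encoded by the word `w`. -/
def cornerPt (Λ : ℕ → ℝ) (w : ℕ → Bool × Bool) (n : ℕ) : ℂ :=
  ∑ k ∈ Finset.range n,
    (((if (w k).1 then sideLen Λ k - sideLen Λ (k + 1) else 0 : ℝ) : ℂ) +
      ((if (w k).2 then sideLen Λ k - sideLen Λ (k + 1) else 0 : ℝ) : ℂ) * Complex.I)

/-- The (closed) generation-`n` square encoded by the word `w`. -/
def cSquare (Λ : ℕ → ℝ) (w : ℕ → Bool × Bool) (n : ℕ) : Set ℂ :=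
  {z : ℂ | (cornerPt Λ w n).re ≤ z.re ∧ z.re ≤ (cornerPt Λ w n).re + sideLen Λ n ∧
    (cornerPt Λ w n).im ≤ z.im ∧ z.im ≤ (cornerPt Λ w n).im + sideLen Λ n}

/-- The family `𝒟_n` of generation-`n` squares. -/
def genSq (Λ : ℕ → ℝ) (n : ℕ) : Set (Set ℂ) := {Q | ∃ w, Q = cSquare Λ w n}

/-- The planar Cantor set `K = ⋂ₙ ⋃ⱼ Qⱼⁿ`. -/
def cantorK (Λ : ℕ → ℝ) : Set ℂ := ⋂ n, ⋃ w : ℕ → Bool × Bool, cSquare Λ w n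

/-- The linear density `a_n = 4^{-n}/s_n` at generation `n`. -/
def linDensity (Λ : ℕ → ℝ) (n : ℕ) : ℝ := 1 / (4 ^ n * sideLen Λ n)

open scoped Classical in
/-- `Q_n(x)`: the generation-`n` square containing `x` (the squares of a given
generation are pairwise disjoint, so it is unique for `x ∈ K`). -/
def Qn (Λ : ℕ → ℝ) (n : ℕ) (x : ℂ) : Set ℂ :=
  if h : ∃ w, x ∈ cSquare Λ w n then cSquare Λ (Classical.choose h) n else ∅

/-- The truncated Cauchy integral at generation `n`:
`T_n(x) = ∫_{K ∖ Q_n(x)} (x-y)⁻¹ dμ(y)`. -/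
def Tn (Λ : ℕ → ℝ) (μ : Measure ℂ) (n : ℕ) (x : ℂ) : ℂ :=
  ∫ y in cantorK Λ \ Qn Λ n x, (x - y)⁻¹ ∂μ

/-- The martingale `S_n(x) = μ(Q_n(x))⁻¹ ∫_{Q_n(x)} T_n dμ`. -/
def Sn (Λ : ℕ → ℝ) (μ : Measure ℂ) (n : ℕ) (x : ℂ) : ℂ :=
  ⨍ z in Qn Λ n x, Tn Λ μ n z ∂μ

section Average

variable {α E : Type*} [MeasurableSpace α] [NormedAddCommGroup E] [NormedSpace ℝ E]
  {μ : Measure α} [IsFiniteMeasure μ] {s t : Set α} {f g : α → E}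

theorem norm_setAverage_le_of_norm_le {C : ℝ} (hs : μ s ≠ 0) (hf : ∀ x ∈ s, ‖f x‖ ≤ C) :
    ‖⨍ x in s, f x ∂μ‖ ≤ C := by
  have hpos : 0 < μ.real s := ENNReal.toReal_pos hs (measure_ne_top μ s)
  rw [setAverage_eq, norm_smul, Real.norm_of_nonneg (inv_nonneg.2 hpos.le),
    inv_mul_le_iff₀ hpos, mul_comm]
  exact norm_setIntegral_le_of_norm_le_const (measure_lt_top μ s) hf

variable [CompleteSpace E]

theorem setAverage_sub_const (hs : μ s ≠ 0) (hf : IntegrableOn f s μ) (c : E) :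
    ⨍ x in s, (f x - c) ∂μ = ⨍ x in s, f x ∂μ - c := by
  rw [setAverage_eq, setAverage_eq, integral_sub hf (integrableOn_const (measure_ne_top μ s)),
    smul_sub, ← setAverage_eq, ← setAverage_eq, setAverage_const hs (measure_ne_top μ s)]

theorem norm_setAverage_sub_setAverage_le {A B : ℝ} (hs : μ s ≠ 0) (ht : μ t ≠ 0)
    (hg : IntegrableOn g s μ) (hf : IntegrableOn f t μ)
    (hA : ∀ z ∈ s, ‖g z - f z‖ ≤ A) (hB : ∀ z ∈ s, ∀ z' ∈ t, ‖f z - f z'‖ ≤ B) :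
    ‖⨍ z in s, g z ∂μ - ⨍ z in t, f z ∂μ‖ ≤ A + B := by
  rw [← setAverage_sub_const hs hg]
  refine norm_setAverage_le_of_norm_le hs fun z hz => ?_
  have hfz : f z - ⨍ z' in t, f z' ∂μ = ⨍ z' in t, (f z - f z') ∂μ := by
    rw [← neg_sub, ← setAverage_sub_const ht hf, setAverage_eq, setAverage_eq, ← smul_neg,
      ← integral_neg]
    simp_rw [neg_sub]
  calc ‖g z - ⨍ z' in t, f z' ∂μ‖
      = ‖(g z - f z) + ⨍ z' in t, (f z - f z') ∂μ‖ := by rw [← hfz, sub_add_sub_cancel]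
    _ ≤ A + B := (norm_add_le _ _).trans
        (add_le_add (hA z hz) (norm_setAverage_le_of_norm_le ht (hB z hz)))

end Average

section CauchyKernel

variable {μ : Measure ℂ} {S : Set ℂ} {z z' : ℂ} {r : ℝ}

theorem norm_inv_sub_sub_inv_sub_le {y : ℂ} (hr : 0 < r) (hz : r ≤ ‖z - y‖) (hz' : r ≤ ‖z' - y‖) :
    ‖(z - y)⁻¹ - (z' - y)⁻¹‖ ≤ ‖z - z'‖ / r ^ 2 := by
  have hzy : z - y ≠ 0 := norm_pos_iff.1 (hr.trans_le hz)
  have hz'y : z' - y ≠ 0 := norm_pos_iff.1 (hr.trans_le hz')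
  have hid : (z - y)⁻¹ - (z' - y)⁻¹ = (z' - z) / ((z - y) * (z' - y)) := by
    field_simp
    ring
  rw [hid, norm_div, norm_mul, norm_sub_rev, sq]
  gcongr

theorem stronglyMeasurable_setIntegral_inv_sub [SFinite μ] (hS : MeasurableSet S) :
    StronglyMeasurable fun z => ∫ y in S, (z - y)⁻¹ ∂μ := by
  simp_rw [← integral_indicator hS]
  refine StronglyMeasurable.integral_prod_right'
    (f := fun p : ℂ × ℂ => S.indicator (fun y => (p.1 - y)⁻¹) p.2) ?_
  exact ((measurable_fst.sub measurable_snd).inv.indicator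
    (measurable_snd hS)).stronglyMeasurable

variable [IsFiniteMeasure μ]

theorem integrableOn_inv_sub (hS : MeasurableSet S) (hr : 0 < r) (h : ∀ y ∈ S, r ≤ ‖z - y‖) :
    IntegrableOn (fun y => (z - y)⁻¹) S μ :=
  Measure.integrableOn_of_bounded (M := r⁻¹) (measure_ne_top μ S)
    (measurable_const.sub measurable_id).inv.aestronglyMeasurable
    (ae_restrict_of_forall_mem hS fun y hy => by
      rw [norm_inv]
      exact inv_anti₀ hr (h y hy))

theorem norm_setIntegral_inv_sub_le (hr : 0 < r) (h : ∀ y ∈ S, r ≤ ‖z - y‖) :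
    ‖∫ y in S, (z - y)⁻¹ ∂μ‖ ≤ μ.real S / r := by
  rw [div_eq_inv_mul]
  refine norm_setIntegral_le_of_norm_le_const (measure_lt_top μ S) fun y hy => ?_
  rw [norm_inv]
  exact inv_anti₀ hr (h y hy)

theorem norm_setIntegral_inv_sub_sub_setIntegral_inv_sub_le (hS : MeasurableSet S) (hr : 0 < r)
    (h : ∀ y ∈ S, r ≤ ‖z - y‖) (h' : ∀ y ∈ S, r ≤ ‖z' - y‖) :
    ‖∫ y in S, (z - y)⁻¹ ∂μ - ∫ y in S, (z' - y)⁻¹ ∂μ‖ ≤ ‖z - z'‖ * μ.real S / r ^ 2 := by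
  rw [← integral_sub (integrableOn_inv_sub hS hr h) (integrableOn_inv_sub hS hr h'),
    mul_div_right_comm]
  exact norm_setIntegral_le_of_norm_le_const (measure_lt_top μ S) fun y hy =>
    norm_inv_sub_sub_inv_sub_le hr (h y hy) (h' y hy)

end CauchyKernel

theorem sideLen_succ (Λ : ℕ → ℝ) (n : ℕ) : sideLen Λ (n + 1) = sideLen Λ n * Λ n :=
  Finset.prod_range_succ _ _

section SideLength

variable {Λ : ℕ → ℝ} {lam : ℝ} (hΛ : ∀ n, 1 / 4 ≤ Λ n ∧ Λ n ≤ lam)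
include hΛ

theorem sideLen_pos (n : ℕ) : 0 < sideLen Λ n :=
  Finset.prod_pos fun k _ => lt_of_lt_of_le (by norm_num) (hΛ k).1

theorem sideLen_succ_le_mul (n : ℕ) : sideLen Λ (n + 1) ≤ lam * sideLen Λ n := by
  rw [sideLen_succ, mul_comm lam]
  exact mul_le_mul_of_nonneg_left (hΛ n).2 (sideLen_pos hΛ n).le

theorem sideLen_le_four_mul_succ (n : ℕ) : sideLen Λ n ≤ 4 * sideLen Λ (n + 1) := by
  rw [sideLen_succ]
  nlinarith [(hΛ n).1, sideLen_pos hΛ n]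

theorem mul_sideLen_le_sub_two_mul_sideLen_succ (n : ℕ) :
    (1 - 2 * lam) * sideLen Λ n ≤ sideLen Λ n - 2 * sideLen Λ (n + 1) := by
  nlinarith [sideLen_succ_le_mul hΛ n]

theorem sideLen_succ_le (hlam : lam < 1 / 2) (n : ℕ) : sideLen Λ (n + 1) ≤ sideLen Λ n := by
  nlinarith [sideLen_succ_le_mul hΛ n, sideLen_pos hΛ n]

end SideLength

def cornerCoord (Λ : ℕ → ℝ) (b : ℕ → Bool) (n : ℕ) : ℝ :=
  ∑ k ∈ Finset.range n, if b k then sideLen Λ k - sideLen Λ (k + 1) else 0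

def cInterval (Λ : ℕ → ℝ) (b : ℕ → Bool) (n : ℕ) : Set ℝ :=
  Icc (cornerCoord Λ b n) (cornerCoord Λ b n + sideLen Λ n)

theorem cornerCoord_succ (Λ : ℕ → ℝ) (b : ℕ → Bool) (n : ℕ) :
    cornerCoord Λ b (n + 1) =
      cornerCoord Λ b n + if b n then sideLen Λ n - sideLen Λ (n + 1) else 0 :=
  Finset.sum_range_succ _ _

theorem cornerPt_re (Λ : ℕ → ℝ) (w : ℕ → Bool × Bool) (n : ℕ) :
    (cornerPt Λ w n).re = cornerCoord Λ (fun k => (w k).1) n := by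
  simp [cornerPt, cornerCoord, Complex.re_sum]

theorem cornerPt_im (Λ : ℕ → ℝ) (w : ℕ → Bool × Bool) (n : ℕ) :
    (cornerPt Λ w n).im = cornerCoord Λ (fun k => (w k).2) n := by
  simp [cornerPt, cornerCoord, Complex.im_sum]

theorem cSquare_eq_preimage (Λ : ℕ → ℝ) (w : ℕ → Bool × Bool) (n : ℕ) :
    cSquare Λ w n = Complex.re ⁻¹' cInterval Λ (fun k => (w k).1) n ∩
      Complex.im ⁻¹' cInterval Λ (fun k => (w k).2) n := by
  ext z
  simp only [cSquare, cInterval, mem_ofPred_eq, mem_inter_iff, mem_preimage, mem_Icc,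
    cornerPt_re, cornerPt_im, and_assoc]

section Intervals

variable {Λ : ℕ → ℝ} {lam : ℝ} (hΛ : ∀ n, 1 / 4 ≤ Λ n ∧ Λ n ≤ lam) (hlam : lam < 1 / 2)
include hΛ hlam

theorem cInterval_succ_subset (b : ℕ → Bool) (n : ℕ) :
    cInterval Λ b (n + 1) ⊆ cInterval Λ b n := by
  intro t ⟨ht₁, ht₂⟩
  have := sideLen_succ_le hΛ hlam n
  rw [cornerCoord_succ] at ht₁ ht₂
  constructor <;> split_ifs at ht₁ ht₂ <;> linarith

theorem cornerCoord_eq_or_le_abs_sub {b b' : ℕ → Bool} {t u : ℝ} :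
    ∀ {n : ℕ}, t ∈ cInterval Λ b n → u ∈ cInterval Λ b' n →
      cornerCoord Λ b n = cornerCoord Λ b' n ∨ (1 - 2 * lam) * sideLen Λ n ≤ |t - u|
  | 0, _, _ => Or.inl (by simp [cornerCoord])
  | n + 1, ht, hu => by
    have hmono : (1 - 2 * lam) * sideLen Λ (n + 1) ≤ (1 - 2 * lam) * sideLen Λ n :=
      mul_le_mul_of_nonneg_left (sideLen_succ_le hΛ hlam n) (by linarith)
    rcases cornerCoord_eq_or_le_abs_sub (cInterval_succ_subset hΛ hlam b n ht)
      (cInterval_succ_subset hΛ hlam b' n hu) with hc | hsep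
    · have hgap := mul_sideLen_le_sub_two_mul_sideLen_succ hΛ n
      obtain ⟨ht₁, ht₂⟩ := ht
      obtain ⟨hu₁, hu₂⟩ := hu
      rw [cornerCoord_succ, hc] at ht₁ ht₂
      rw [cornerCoord_succ] at hu₁ hu₂
      rw [cornerCoord_succ, cornerCoord_succ, hc, le_abs]
      cases hb : b n <;> cases hb' : b' n <;>
        simp only [hb, hb', if_true, if_false, Bool.false_eq_true, true_or] at ht₁ ht₂ hu₁ hu₂ ⊢
      · exact Or.inr (Or.inr (by linarith))
      · exact Or.inr (Or.inl (by linarith))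
    · exact Or.inr (hmono.trans hsep)

end Intervals

theorem cSquare_congr (Λ : ℕ → ℝ) {w w' : ℕ → Bool × Bool} {n : ℕ} (h : ∀ k < n, w k = w' k) :
    cSquare Λ w n = cSquare Λ w' n := by
  have : cornerPt Λ w n = cornerPt Λ w' n :=
    Finset.sum_congr rfl fun k hk => by rw [h k (Finset.mem_range.1 hk)]
  simp only [cSquare, this]

theorem measurableSet_cSquare (Λ : ℕ → ℝ) (w : ℕ → Bool × Bool) (n : ℕ) :
    MeasurableSet (cSquare Λ w n) := by
  rw [cSquare_eq_preimage]
  exact (Complex.measurable_re measurableSet_Icc).inter (Complex.measurable_im measurableSet_Icc)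

theorem measurableSet_cantorK (Λ : ℕ → ℝ) : MeasurableSet (cantorK Λ) := by
  refine MeasurableSet.iInter fun n => ?_
  -- `cSquare Λ w n` only depends on `w` through its first `n` digits
  have hfin : (⋃ w : ℕ → Bool × Bool, cSquare Λ w n) =
      ⋃ v : Fin n → Bool × Bool,
        cSquare Λ (fun k => if h : k < n then v ⟨k, h⟩ else (false, false)) n := by
    refine Subset.antisymm (iUnion_subset fun w => ?_)
      (iUnion_subset fun v => subset_iUnion (cSquare Λ · n) _)
    exact (cSquare_congr Λ fun k hk => by simp [hk]).subset.trans
      (subset_iUnion_of_subset (fun k => w k) subset_rfl)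
  rw [hfin]
  exact MeasurableSet.iUnion fun v => measurableSet_cSquare Λ _ n

theorem norm_sub_le_of_mem_cSquare {Λ : ℕ → ℝ} {w : ℕ → Bool × Bool} {n : ℕ} {z z' : ℂ}
    (hz : z ∈ cSquare Λ w n) (hz' : z' ∈ cSquare Λ w n) : ‖z - z'‖ ≤ 2 * sideLen Λ n := by
  obtain ⟨hz₁, hz₂, hz₃, hz₄⟩ := hz
  obtain ⟨hz'₁, hz'₂, hz'₃, hz'₄⟩ := hz'
  calc ‖z - z'‖ ≤ |(z - z').re| + |(z - z').im| := Complex.norm_le_abs_re_add_abs_im _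
    _ ≤ sideLen Λ n + sideLen Λ n := by
      rw [Complex.sub_re, Complex.sub_im]
      gcongr <;> rw [abs_le] <;> constructor <;> linarith
    _ = 2 * sideLen Λ n := by ring

theorem exists_mem_cSquare_of_mem_Qn {Λ : ℕ → ℝ} {n : ℕ} {x z : ℂ} (hz : z ∈ Qn Λ n x) :
    ∃ w, x ∈ cSquare Λ w n := by
  by_contra h
  simp [Qn, h] at hz

section Squares

variable {Λ : ℕ → ℝ} {lam : ℝ} (hΛ : ∀ n, 1 / 4 ≤ Λ n ∧ Λ n ≤ lam) (hlam : lam < 1 / 2)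
include hΛ hlam

theorem cSquare_succ_subset (w : ℕ → Bool × Bool) (n : ℕ) :
    cSquare Λ w (n + 1) ⊆ cSquare Λ w n := by
  rw [cSquare_eq_preimage, cSquare_eq_preimage]
  exact inter_subset_inter (preimage_mono (cInterval_succ_subset hΛ hlam _ n))
    (preimage_mono (cInterval_succ_subset hΛ hlam _ n))

theorem cSquare_eq_or_le_norm_sub {w w' : ℕ → Bool × Bool} {n : ℕ} {z y : ℂ}
    (hz : z ∈ cSquare Λ w n) (hy : y ∈ cSquare Λ w' n) :
    cSquare Λ w n = cSquare Λ w' n ∨ (1 - 2 * lam) * sideLen Λ n ≤ ‖z - y‖ := by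
  rw [cSquare_eq_preimage] at hz hy
  have hre := Complex.sub_re z y ▸ Complex.abs_re_le_norm (z - y)
  have him := Complex.sub_im z y ▸ Complex.abs_im_le_norm (z - y)
  rcases cornerCoord_eq_or_le_abs_sub hΛ hlam hz.1 hy.1 with hc₁ | hsep
  · rcases cornerCoord_eq_or_le_abs_sub hΛ hlam hz.2 hy.2 with hc₂ | hsep
    · have : cornerPt Λ w n = cornerPt Λ w' n := by
        apply Complex.ext <;> simp only [cornerPt_re, cornerPt_im, hc₁, hc₂]
      exact Or.inl (by simp only [cSquare, this])
    · exact Or.inr (hsep.trans him)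
  · exact Or.inr (hsep.trans hre)

theorem cSquare_eq_of_mem {w w' : ℕ → Bool × Bool} {n : ℕ} {z : ℂ}
    (hz : z ∈ cSquare Λ w n) (hz' : z ∈ cSquare Λ w' n) : cSquare Λ w n = cSquare Λ w' n := by
  refine (cSquare_eq_or_le_norm_sub hΛ hlam hz hz').resolve_right fun h => ?_
  rw [sub_self, norm_zero] at h
  nlinarith [sideLen_pos hΛ n]

theorem Qn_eq_cSquare {w : ℕ → Bool × Bool} {n : ℕ} {x : ℂ} (hx : x ∈ cSquare Λ w n) :
    Qn Λ n x = cSquare Λ w n := by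
  have h : ∃ w, x ∈ cSquare Λ w n := ⟨w, hx⟩
  rw [Qn, dif_pos h]
  exact cSquare_eq_of_mem hΛ hlam (Classical.choose_spec h) hx

theorem Qn_eq_of_mem_Qn {n : ℕ} {x z : ℂ} (hz : z ∈ Qn Λ n x) : Qn Λ n z = Qn Λ n x := by
  obtain ⟨w, hx⟩ := exists_mem_cSquare_of_mem_Qn hz
  rw [Qn_eq_cSquare hΛ hlam hx] at hz ⊢
  exact Qn_eq_cSquare hΛ hlam hz

theorem Qn_succ_subset (n : ℕ) (x : ℂ) : Qn Λ (n + 1) x ⊆ Qn Λ n x := by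
  intro z hz
  obtain ⟨w, hx⟩ := exists_mem_cSquare_of_mem_Qn hz
  rw [Qn_eq_cSquare hΛ hlam hx] at hz
  rw [Qn_eq_cSquare hΛ hlam (cSquare_succ_subset hΛ hlam w n hx)]
  exact cSquare_succ_subset hΛ hlam w n hz

theorem le_norm_sub_of_mem_Qn {n : ℕ} {x z y : ℂ} (hz : z ∈ Qn Λ n x)
    (hy : y ∈ cantorK Λ \ Qn Λ n x) : (1 - 2 * lam) * sideLen Λ n ≤ ‖z - y‖ := by
  obtain ⟨w, hx⟩ := exists_mem_cSquare_of_mem_Qn hz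
  obtain ⟨w', hy'⟩ := mem_iUnion.1 (mem_iInter.1 hy.1 n)
  rw [Qn_eq_cSquare hΛ hlam hx] at hz hy
  exact (cSquare_eq_or_le_norm_sub hΛ hlam hz hy').resolve_left fun h => hy.2 (h ▸ hy')

theorem norm_sub_le_of_mem_Qn {n : ℕ} {x z z' : ℂ} (hz : z ∈ Qn Λ n x) (hz' : z' ∈ Qn Λ n x) :
    ‖z - z'‖ ≤ 2 * sideLen Λ n := by
  obtain ⟨w, hx⟩ := exists_mem_cSquare_of_mem_Qn hz
  rw [Qn_eq_cSquare hΛ hlam hx] at hz hz'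
  exact norm_sub_le_of_mem_cSquare hz hz'

theorem cantorK_subset_Qn_zero {x z : ℂ} (hz : z ∈ Qn Λ 0 x) : cantorK Λ ⊆ Qn Λ 0 x := by
  obtain ⟨w, hx⟩ := exists_mem_cSquare_of_mem_Qn hz
  intro y hy
  obtain ⟨w', hy'⟩ := mem_iUnion.1 (mem_iInter.1 hy 0)
  rwa [Qn_eq_cSquare hΛ hlam hx, cSquare_congr Λ (w' := w') fun k hk => absurd hk k.not_lt_zero]

end Squares

theorem measurableSet_Qn (Λ : ℕ → ℝ) (n : ℕ) (x : ℂ) : MeasurableSet (Qn Λ n x) := by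
  unfold Qn
  split
  · exact measurableSet_cSquare Λ _ n
  · exact MeasurableSet.empty

def layer (Λ : ℕ → ℝ) (n : ℕ) (x : ℂ) : Set ℂ := (cantorK Λ \ Qn Λ (n + 1) x) ∩ Qn Λ n x

theorem measurableSet_layer (Λ : ℕ → ℝ) (n : ℕ) (x : ℂ) : MeasurableSet (layer Λ n x) :=
  ((measurableSet_cantorK Λ).diff (measurableSet_Qn Λ (n + 1) x)).inter (measurableSet_Qn Λ n x)

/-- The fixed point of `c ↦ 4λ² c + 4 / (1 - 2λ)²`: this is what lets the Lipschitz bound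
`norm_Tn_sub_Tn_le` pass from `n` to `n + 1`. -/
def lipConst (lam : ℝ) : ℝ := 4 / ((1 - 2 * lam) ^ 2 * (1 - 4 * lam ^ 2))

section Truncated

variable {Λ : ℕ → ℝ} {lam : ℝ} (hΛ : ∀ n, 1 / 4 ≤ Λ n ∧ Λ n ≤ lam) (hlam : lam < 1 / 2)
  {μ : Measure ℂ}
include hΛ hlam

theorem lipConst_pos : 0 < lipConst lam := by
  have := (hΛ 0).1.trans (hΛ 0).2
  unfold lipConst
  have : 0 < 1 - 4 * lam ^ 2 := by nlinarith
  have : 0 < 1 - 2 * lam := by linarith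
  positivity

theorem lipConst_mul_sq_add :
    lipConst lam * lam ^ 2 + 1 / (1 - 2 * lam) ^ 2 = lipConst lam / 4 := by
  have := (hΛ 0).1.trans (hΛ 0).2
  have : 1 - 4 * lam ^ 2 ≠ 0 := by nlinarith
  have : 1 - 2 * lam ≠ 0 := by linarith
  unfold lipConst
  field_simp
  ring

theorem lipConst_bound_succ {n : ℕ} {d m : ℝ} (hd : 0 ≤ d) (hm : m ≤ (4 ^ n : ℝ)⁻¹) :
    lipConst lam * d / (4 ^ n * sideLen Λ n ^ 2) + d * m / ((1 - 2 * lam) * sideLen Λ (n + 1)) ^ 2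
      ≤ lipConst lam * d / (4 ^ (n + 1) * sideLen Λ (n + 1) ^ 2) := by
  have hs := sideLen_pos hΛ n
  have hs₁ := sideLen_pos hΛ (n + 1)
  have hc := lipConst_pos hΛ hlam
  have hδ : 0 < 1 - 2 * lam := by linarith
  set P := d / (4 ^ n * sideLen Λ (n + 1) ^ 2) with hP_def
  have hP : 0 ≤ P := by positivity
  have hold : lipConst lam * d / (4 ^ n * sideLen Λ n ^ 2) ≤ lipConst lam * lam ^ 2 * P := by
    have hsq : 1 / sideLen Λ n ^ 2 ≤ lam ^ 2 / sideLen Λ (n + 1) ^ 2 := by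
      rw [div_le_div_iff₀ (by positivity) (by positivity)]
      nlinarith [sideLen_succ_le_mul hΛ n]
    calc _ = lipConst lam * d / 4 ^ n * (1 / sideLen Λ n ^ 2) := by ring
      _ ≤ lipConst lam * d / 4 ^ n * (lam ^ 2 / sideLen Λ (n + 1) ^ 2) := by gcongr
      _ = lipConst lam * lam ^ 2 * P := by rw [hP_def]; ring
  have hnew : d * m / ((1 - 2 * lam) * sideLen Λ (n + 1)) ^ 2 ≤ 1 / (1 - 2 * lam) ^ 2 * P := by
    calc _ ≤ d * (4 ^ n : ℝ)⁻¹ / ((1 - 2 * lam) * sideLen Λ (n + 1)) ^ 2 := by gcongr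
      _ = 1 / (1 - 2 * lam) ^ 2 * P := by rw [hP_def]; field_simp
  calc _ ≤ (lipConst lam * lam ^ 2 + 1 / (1 - 2 * lam) ^ 2) * P := by linarith
    _ = _ := by
      rw [lipConst_mul_sq_add hΛ hlam, pow_succ]
      ring

theorem mul_sideLen_pos (n : ℕ) : 0 < (1 - 2 * lam) * sideLen Λ n :=
  mul_pos (by linarith) (sideLen_pos hΛ n)

theorem Tn_eq_of_mem_Qn {n : ℕ} {x z : ℂ} (hz : z ∈ Qn Λ n x) :
    Tn Λ μ n z = ∫ y in cantorK Λ \ Qn Λ n x, (z - y)⁻¹ ∂μ := by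
  rw [Tn, Qn_eq_of_mem_Qn hΛ hlam hz]

theorem measureReal_Qn_le
    (hμQ : ∀ (w : ℕ → Bool × Bool) (n : ℕ), μ (cSquare Λ w n) = (4 : ℝ≥0∞)⁻¹ ^ n)
    (n : ℕ) (x : ℂ) : μ.real (Qn Λ n x) ≤ (4 ^ n : ℝ)⁻¹ := by
  by_cases h : ∃ w, x ∈ cSquare Λ w n
  · obtain ⟨w, hx⟩ := h
    rw [Qn_eq_cSquare hΛ hlam hx, measureReal_def, hμQ, ENNReal.toReal_pow, ENNReal.toReal_inv,
      ENNReal.toReal_ofNat, inv_pow]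
  · simp [Qn, h]

theorem measure_Qn_ne_zero
    (hμQ : ∀ (w : ℕ → Bool × Bool) (n : ℕ), μ (cSquare Λ w n) = (4 : ℝ≥0∞)⁻¹ ^ n)
    {x : ℂ} (hx : x ∈ cantorK Λ) (n : ℕ) : μ (Qn Λ n x) ≠ 0 := by
  obtain ⟨w, hw⟩ := mem_iUnion.1 (mem_iInter.1 hx n)
  rw [Qn_eq_cSquare hΛ hlam hw, hμQ]
  simp

variable [IsFiniteMeasure μ]

theorem integrableOn_inv_sub_cantorK_diff_Qn {n : ℕ} {x z : ℂ} (hz : z ∈ Qn Λ n x) :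
    IntegrableOn (fun y => (z - y)⁻¹) (cantorK Λ \ Qn Λ n x) μ :=
  integrableOn_inv_sub ((measurableSet_cantorK Λ).diff (measurableSet_Qn Λ n x))
    (mul_sideLen_pos hΛ hlam n) fun _ hy => le_norm_sub_of_mem_Qn hΛ hlam hz hy

theorem integrableOn_Tn (n : ℕ) (x : ℂ) : IntegrableOn (Tn Λ μ n) (Qn Λ n x) μ := by
  have hS := (measurableSet_cantorK Λ).diff (measurableSet_Qn Λ n x)
  refine IntegrableOn.congr_fun ?_ (fun z hz => (Tn_eq_of_mem_Qn hΛ hlam hz).symm)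
    (measurableSet_Qn Λ n x)
  exact Measure.integrableOn_of_bounded (measure_ne_top μ _)
    (stronglyMeasurable_setIntegral_inv_sub hS).aestronglyMeasurable
    (ae_restrict_of_forall_mem (measurableSet_Qn Λ n x) fun z hz =>
      norm_setIntegral_inv_sub_le (mul_sideLen_pos hΛ hlam n) fun _ hy =>
        le_norm_sub_of_mem_Qn hΛ hlam hz hy)

theorem Tn_succ_eq {n : ℕ} {x z : ℂ} (hz : z ∈ Qn Λ (n + 1) x) :
    Tn Λ μ (n + 1) z =
      Tn Λ μ n z + ∫ y in layer Λ n x, (z - y)⁻¹ ∂μ := by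
  have hdiff : (cantorK Λ \ Qn Λ (n + 1) x) \ Qn Λ n x = cantorK Λ \ Qn Λ n x := by
    rw [sdiff_sdiff, union_eq_right.2 (Qn_succ_subset hΛ hlam n x)]
  rw [Tn_eq_of_mem_Qn hΛ hlam hz, Tn_eq_of_mem_Qn hΛ hlam (Qn_succ_subset hΛ hlam n x hz),
    ← integral_inter_add_sdiff (measurableSet_Qn Λ n x)
      (integrableOn_inv_sub_cantorK_diff_Qn hΛ hlam hz), hdiff, add_comm, layer]

theorem measureReal_layer_le
    (hμQ : ∀ (w : ℕ → Bool × Bool) (n : ℕ), μ (cSquare Λ w n) = (4 : ℝ≥0∞)⁻¹ ^ n)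
    (n : ℕ) (x : ℂ) : μ.real (layer Λ n x) ≤ (4 ^ n : ℝ)⁻¹ :=
  (measureReal_mono inter_subset_right).trans (measureReal_Qn_le hΛ hlam hμQ n x)

variable (hμQ : ∀ (w : ℕ → Bool × Bool) (n : ℕ), μ (cSquare Λ w n) = (4 : ℝ≥0∞)⁻¹ ^ n)
include hμQ

theorem norm_Tn_succ_sub_Tn_le {n : ℕ} {x z : ℂ} (hz : z ∈ Qn Λ (n + 1) x) :
    ‖Tn Λ μ (n + 1) z - Tn Λ μ n z‖ ≤ 4 / (1 - 2 * lam) * linDensity Λ n := by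
  rw [Tn_succ_eq hΛ hlam hz, add_sub_cancel_left]
  calc _ ≤ μ.real (layer Λ n x) / ((1 - 2 * lam) * sideLen Λ (n + 1)) :=
        norm_setIntegral_inv_sub_le (mul_sideLen_pos hΛ hlam (n + 1)) fun _ hy =>
          le_norm_sub_of_mem_Qn hΛ hlam hz hy.1
    _ ≤ (4 ^ n : ℝ)⁻¹ / ((1 - 2 * lam) * sideLen Λ (n + 1)) := by
        gcongr
        · exact (mul_sideLen_pos hΛ hlam (n + 1)).le
        · exact measureReal_layer_le hΛ hlam hμQ n x
    _ ≤ 4 / (1 - 2 * lam) * linDensity Λ n := by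
        have hδ : 0 < 1 - 2 * lam := by linarith
        have hs := sideLen_pos hΛ n
        have hs₁ := sideLen_pos hΛ (n + 1)
        rw [linDensity, div_le_iff₀ (by positivity)]
        field_simp
        linarith [sideLen_le_four_mul_succ hΛ n]

theorem norm_Tn_sub_Tn_le {x : ℂ} : ∀ (n : ℕ) {z z' : ℂ}, z ∈ Qn Λ n x → z' ∈ Qn Λ n x →
    ‖Tn Λ μ n z - Tn Λ μ n z'‖ ≤ lipConst lam * ‖z - z'‖ / (4 ^ n * sideLen Λ n ^ 2)
  | 0, z, z', hz, hz' => by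
    have hK : cantorK Λ \ Qn Λ 0 x = ∅ := sdiff_eq_empty.2 (cantorK_subset_Qn_zero hΛ hlam hz)
    rw [Tn_eq_of_mem_Qn hΛ hlam hz, Tn_eq_of_mem_Qn hΛ hlam hz', hK]
    simp only [setIntegral_empty, sub_zero, norm_zero]
    have := lipConst_pos hΛ hlam
    have := sideLen_pos hΛ 0
    positivity
  | n + 1, z, z', hz, hz' => by
    rw [Tn_succ_eq hΛ hlam hz, Tn_succ_eq hΛ hlam hz', add_sub_add_comm]
    calc _ ≤ ‖Tn Λ μ n z - Tn Λ μ n z'‖ +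
          ‖∫ y in layer Λ n x, (z - y)⁻¹ ∂μ - ∫ y in layer Λ n x, (z' - y)⁻¹ ∂μ‖ :=
        norm_add_le _ _
      _ ≤ lipConst lam * ‖z - z'‖ / (4 ^ n * sideLen Λ n ^ 2) +
          ‖z - z'‖ * μ.real (layer Λ n x) / ((1 - 2 * lam) * sideLen Λ (n + 1)) ^ 2 :=
        add_le_add
          (norm_Tn_sub_Tn_le n (Qn_succ_subset hΛ hlam n x hz) (Qn_succ_subset hΛ hlam n x hz'))
          (norm_setIntegral_inv_sub_sub_setIntegral_inv_sub_le (measurableSet_layer Λ n x)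
            (mul_sideLen_pos hΛ hlam (n + 1))
            (fun _ hy => le_norm_sub_of_mem_Qn hΛ hlam hz hy.1)
            (fun _ hy => le_norm_sub_of_mem_Qn hΛ hlam hz' hy.1))
      _ ≤ _ := lipConst_bound_succ hΛ hlam (norm_nonneg _) (measureReal_layer_le hΛ hlam hμQ n x)

theorem norm_Tn_sub_Tn_le_linDensity {n : ℕ} {x z z' : ℂ} (hz : z ∈ Qn Λ n x)
    (hz' : z' ∈ Qn Λ n x) : ‖Tn Λ μ n z - Tn Λ μ n z'‖ ≤ 2 * lipConst lam * linDensity Λ n := by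
  have hs := sideLen_pos hΛ n
  have hc := lipConst_pos hΛ hlam
  calc _ ≤ lipConst lam * ‖z - z'‖ / (4 ^ n * sideLen Λ n ^ 2) :=
        norm_Tn_sub_Tn_le hΛ hlam hμQ n hz hz'
    _ ≤ lipConst lam * (2 * sideLen Λ n) / (4 ^ n * sideLen Λ n ^ 2) := by
      gcongr
      exact norm_sub_le_of_mem_Qn hΛ hlam hz hz'
    _ = 2 * lipConst lam * linDensity Λ n := by
      rw [linDensity]
      field_simp

end Truncated

theorem martingale_increment_bound_general (Λ : ℕ → ℝ) (lam : ℝ) (hlam : lam < 1 / 2)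
    (hΛ : ∀ n, 1 / 4 ≤ Λ n ∧ Λ n ≤ lam)
    (μ : Measure ℂ) [IsProbabilityMeasure μ]
    (hμQ : ∀ (w : ℕ → Bool × Bool) (n : ℕ), μ (cSquare Λ w n) = (4 : ℝ≥0∞)⁻¹ ^ n) :
    ∃ C : ℝ, 0 < C ∧ ∀ (n : ℕ), ∀ x ∈ cantorK Λ,
      ‖Sn Λ μ (n + 1) x - Sn Λ μ n x‖ ≤ C * linDensity Λ n := by
  have hδ : 0 < 1 - 2 * lam := by linarith
  have hc := lipConst_pos hΛ hlam
  refine ⟨4 / (1 - 2 * lam) + 2 * lipConst lam, by positivity, fun n x hx => ?_⟩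
  rw [add_mul]
  exact norm_setAverage_sub_setAverage_le (measure_Qn_ne_zero hΛ hlam hμQ hx (n + 1))
    (measure_Qn_ne_zero hΛ hlam hμQ hx n) (integrableOn_Tn hΛ hlam (n + 1) x)
    (integrableOn_Tn hΛ hlam n x) (fun z hz => norm_Tn_succ_sub_Tn_le hΛ hlam hμQ hz)
    (fun z hz z' hz' => norm_Tn_sub_Tn_le_linDensity hΛ hlam hμQ
      (Qn_succ_subset hΛ hlam n x hz) hz')

/-- The martingale has increments bounded by the densities:
`|S_{n+1}(x) - S_n(x)| ≤ C a_n` for all `n ≥ 0` and `x ∈ K`. -/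
theorem martingale_increment_bound (Λ : ℕ → ℝ) (lam : ℝ) (hlam : lam < 1 / 2)
    (hΛ : ∀ n, 1 / 4 ≤ Λ n ∧ Λ n ≤ lam)
    (μ : Measure ℂ) [IsProbabilityMeasure μ]
    (hμK : μ (cantorK Λ) = 1)
    (hμQ : ∀ (w : ℕ → Bool × Bool) (n : ℕ), μ (cSquare Λ w n) = (4 : ℝ≥0∞)⁻¹ ^ n) :
    ∃ C : ℝ, 0 < C ∧ ∀ (n : ℕ), ∀ x ∈ cantorK Λ,
      ‖Sn Λ μ (n + 1) x - Sn Λ μ n x‖ ≤ C * linDensity Λ n :=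
  martingale_increment_bound_general Λ lam hlam hΛ μ hμQ
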